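/- Soundness of the deallocation rule: If M ⊨ β ∧ x ∉ Sp(β) ∧ f(x) = f(x) and H = ⟦Sp(β ∧ x ∉ Sp(β) ∧ f(x)=f(x))⟧_M, then executing free(x) from (M,H) yields (M', H') with M' = M, H' = H \ {⟦x⟧_M}, M' ⊨ β, and H' = ⟦Sp(β)⟧_{M'}. -/
import Mathlib


attribute [local instance] Classical.propDecidable

/- Frame-logic terms and formulas over variables `V`, with a single mutable
unary function symbol `f` (modelling the heap pointer), equality, conjunction,
negation, support-membership atoms `t ∈ Sp(φ)`, if-then-else, and guarded
existential quantification `∃y:γ. φ`. -/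
mutual
inductive FTm (V : Type) where
  | var : V → FTm V
  | app : FTm V → FTm V                      -- f(t)
  | ite : FFm V → FTm V → FTm V → FTm V

inductive FFm (V : Type) where
  | eq   : FTm V → FTm V → FFm V
  | conj : FFm V → FFm V → FFm V
  | neg  : FFm V → FFm V
  | inSp : FTm V → FFm V → FFm V             -- t ∈ Sp(φ)
  | ite  : FFm V → FFm V → FFm V → FFm V
  | exq  : V → FFm V → FFm V → FFm V         -- ∃ y : γ. φ
end

/- Semantics on a model `(ν, f)`: a store `ν : V → L` and the mutable
function `f : L → L`; `val`/`holds` are the standard values/truth, while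
`sp` implements the support equations of frame logic. -/
mutual
noncomputable def FTm.val {V L : Type} [DecidableEq V] (ν : V → L) (f : L → L) : FTm V → L
  | .var z => ν z
  | .app t => f (FTm.val ν f t)
  | .ite g t₁ t₂ => if FFm.holds ν f g then FTm.val ν f t₁ else FTm.val ν f t₂

noncomputable def FFm.holds {V L : Type} [DecidableEq V] (ν : V → L) (f : L → L) : FFm V → Prop
  | .eq t₁ t₂ => FTm.val ν f t₁ = FTm.val ν f t₂
  | .conj φ ψ => FFm.holds ν f φ ∧ FFm.holds ν f ψ
  | .neg φ => ¬ FFm.holds ν f φ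
  | .inSp t φ => FTm.val ν f t ∈ FFm.sp ν f φ
  | .ite g φ ψ => if FFm.holds ν f g then FFm.holds ν f φ else FFm.holds ν f ψ
  | .exq y γ φ => ∃ u : L, FFm.holds (Function.update ν y u) f γ ∧
      FFm.holds (Function.update ν y u) f φ

noncomputable def FTm.sp {V L : Type} [DecidableEq V] (ν : V → L) (f : L → L) : FTm V → Set L
  | .var _ => ∅
  | .app t => {FTm.val ν f t} ∪ FTm.sp ν f t
  | .ite g t₁ t₂ => FFm.sp ν f g ∪
      if FFm.holds ν f g then FTm.sp ν f t₁ else FTm.sp ν f t₂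

noncomputable def FFm.sp {V L : Type} [DecidableEq V] (ν : V → L) (f : L → L) : FFm V → Set L
  | .eq t₁ t₂ => FTm.sp ν f t₁ ∪ FTm.sp ν f t₂
  | .conj φ ψ => FFm.sp ν f φ ∪ FFm.sp ν f ψ
  | .neg φ => FFm.sp ν f φ
  | .inSp t φ => FTm.sp ν f t ∪ FFm.sp ν f φ
  | .ite g φ ψ => FFm.sp ν f g ∪
      if FFm.holds ν f g then FFm.sp ν f φ else FFm.sp ν f ψ
  | .exq y γ φ => (⋃ u : L, FFm.sp (Function.update ν y u) f γ) ∪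
      ⋃ u : L, {a | FFm.holds (Function.update ν y u) f γ ∧
        a ∈ FFm.sp (Function.update ν y u) f φ}
end

/-- Soundness of the deallocation rule: if `M = (ν, f)` satisfies
`β ∧ x ∉ Sp(β) ∧ f(x) = f(x)` and `H` is the support of this precondition,
then `free(x)` executes without fault (`⟦x⟧ ∈ H`), leaving the model
unchanged (`M' = M`) and `H' = H \ {⟦x⟧}`; moreover `M' ⊨ β` and
`H' = ⟦Sp(β)⟧_{M'}`. -/
theorem dealloc_sound {V L : Type} [DecidableEq V]
    (ν : V → L) (f : L → L) (H : Set L) (x : V) (β : FFm V)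
    (hpre : FFm.holds ν f
      (FFm.conj (FFm.conj β (FFm.neg (FFm.inSp (FTm.var x) β)))
        (FFm.eq (FTm.app (FTm.var x)) (FTm.app (FTm.var x)))))
    (hH : H = FFm.sp ν f
      (FFm.conj (FFm.conj β (FFm.neg (FFm.inSp (FTm.var x) β)))
        (FFm.eq (FTm.app (FTm.var x)) (FTm.app (FTm.var x))))) :
    ν x ∈ H ∧ FFm.holds ν f β ∧ FFm.sp ν f β = H \ {ν x} := by
  simp only [FFm.holds, FFm.sp, FTm.sp, FTm.val] at hpre hH
  obtain ⟨⟨hβ, hnot⟩, -⟩ := hpre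
  have hHeq : H = FFm.sp ν f β ∪ {ν x} := by
    rw [hH]; ext a
    simp [Set.mem_union, Set.mem_singleton_iff]
  refine ⟨by rw [hHeq]; right; rfl, hβ, ?_⟩
  rw [hHeq]; ext a
  simp only [Set.mem_diff, Set.mem_union, Set.mem_singleton_iff]
  constructor
  · intro ha; exact ⟨Or.inl ha, fun h => hnot (h ▸ ha)⟩
  · rintro ⟨h | h, hne⟩
    · exact h
    · exact absurd h hne
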